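/- arXiv:2501.03922 — 8 statements merged into one kernel-verified Lean document; each statement's English description precedes it below -/
import Mathlib

section
/- Let f : F_2^n → F_2^m be an APN function, l < m a positive integer, and π : F_2^m → F_2^l an F_2-linear surjection. Then π ∘ f is APN if and only if D_f*(F_2^n) ∩ ker(π) = ∅, where D_f*(F_2^n) = { B_f(x,t) + B_f(y,t) : x,y,t ∈ F_2^n, x ≠ y, t ≠ 0, x ≠ y + t } and B_f(x,t) = f(x+t) + f(x) + f(t) + f(0). -/
/-- `f` is almost perfect nonlinear: for every nonzero `a` and every `b`,
the equation `f (x + a) + f x = b` has at most 2 solutions. -/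
def IsAPN {V W : Type*} [AddCommGroup V] [AddCommGroup W] (f : V → W) : Prop :=
  ∀ a : V, a ≠ 0 → ∀ b : W, {x : V | f (x + a) + f x = b}.ncard ≤ 2

/-- `B_f(x,t) = f(x+t) + f(x) + f(t) + f(0)`. -/
def Bf {V W : Type*} [AddCommGroup V] [AddCommGroup W] (f : V → W) (x t : V) : W :=
  f (x + t) + f x + f t + f 0

/-- `D_f^*(F_2^n)`. -/
def DfStar {V W : Type*} [AddCommGroup V] [AddCommGroup W] (f : V → W) : Set W :=
  {d | ∃ x y t : V, x ≠ y ∧ t ≠ 0 ∧ x ≠ y + t ∧ d = Bf f x t + Bf f y t}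

/-!
Write `Dₐf(x) = f(x + a) + f(x)`. In characteristic 2, `B_f(x,a) + B_f(y,a) = Dₐf(x) + Dₐf(y)`
and `Dₐf(x + a) = Dₐf(x)`. So `π ∘ f` fails to be APN exactly when three distinct points
`x, y, z` have the same value of `π ∘ Dₐf`. Since `f` is APN, two of them, say `x, y`, have
different values of `Dₐf`, hence `x ≠ y + a`, and `Dₐf(x) + Dₐf(y)` lies in `D_f^* ∩ ker π`.
Conversely, an element `B_f(x,t) + B_f(y,t)` of `D_f^* ∩ ker π` makes `x, x + t, y` three
distinct solutions of `π(D_t f(z)) = π(D_t f(x))`.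
-/

section

variable {V W U : Type*} [AddCommGroup V] [AddCommGroup W] [AddCommGroup U]

lemma not_isAPN_iff [Finite V] {f : V → W} :
    ¬ IsAPN f ↔ ∃ a ≠ 0, ∃ b x y z, x ≠ y ∧ x ≠ z ∧ y ≠ z ∧
      f (x + a) + f x = b ∧ f (y + a) + f y = b ∧ f (z + a) + f z = b := by
  simp only [IsAPN, not_forall, not_le, Set.two_lt_ncard (Set.toFinite _), Set.mem_ofPred_eq,
    exists_prop]
  constructor
  · rintro ⟨a, ha, b, x, hx, y, hy, z, hz, hxy, hxz, hyz⟩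
    exact ⟨a, ha, b, x, y, z, hxy, hxz, hyz, hx, hy, hz⟩
  · rintro ⟨a, ha, b, x, y, z, hxy, hxz, hyz, hx, hy, hz⟩
    exact ⟨a, ha, b, x, hx, y, hy, z, hz, hxy, hxz, hyz⟩

variable [Module (ZMod 2) W]

lemma Bf_add_Bf (f : V → W) (x y t : V) :
    Bf f x t + Bf f y t = (f (x + t) + f x) + (f (y + t) + f y) := by
  have h₁ := ZModModule.add_self (f t)
  have h₀ := ZModModule.add_self (f 0)
  simp only [Bf]
  linear_combination (norm := abel_nf) h₁ + h₀

lemma AddMonoidHom.map_eq_map_iff_add_mem_ker (π : W →+ U) {u v : W} :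
    π u = π v ↔ u + v ∈ π.ker := by
  rw [← ZModModule.sub_eq_add, AddMonoidHom.mem_ker, map_sub, sub_eq_zero]

variable [Module (ZMod 2) V]

lemma ZModModule.add_add_self_right (x a : V) : x + a + a = x := by
  rw [add_assoc, ZModModule.add_self, add_zero]

variable {f : V → W} {π : W →+ U}

lemma add_mem_DfStar_of_ne {a x y : V} (ha : a ≠ 0) (hxy : x ≠ y)
    (hD : f (x + a) + f x ≠ f (y + a) + f y) :
    (f (x + a) + f x) + (f (y + a) + f y) ∈ DfStar f :=
  ⟨x, y, a, hxy, ha, fun h ↦ hD (by rw [h, ZModModule.add_add_self_right, add_comm]),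
    (Bf_add_Bf f x y a).symm⟩

lemma disjoint_DfStar_ker_of_isAPN_comp [Finite V] (h : IsAPN (π ∘ f)) :
    Disjoint (DfStar f) π.ker := by
  rw [Set.disjoint_left]
  rintro _ ⟨x, y, t, hxy, ht, hxyt, rfl⟩ hker
  rw [SetLike.mem_coe, Bf_add_Bf, ← π.map_eq_map_iff_add_mem_ker] at hker
  refine not_isAPN_iff.mpr
    ⟨t, ht, π (f (x + t) + f x), x, x + t, y, ?_, hxy, ?_, (map_add π _ _).symm, ?_, ?_⟩ h
  · exact fun h ↦ ht (left_eq_add.mp h)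
  · exact fun h ↦ hxyt (by rw [← h, ZModModule.add_add_self_right])
  · simp only [Function.comp_apply, ZModModule.add_add_self_right, map_add]
    exact add_comm _ _
  · simp only [Function.comp_apply, ← map_add]
    exact hker.symm

lemma isAPN_comp_of_disjoint_DfStar_ker [Finite V] (hf : IsAPN f)
    (h : Disjoint (DfStar f) π.ker) : IsAPN (π ∘ f) := by
  by_contra hπf
  obtain ⟨a, ha, b, x, y, z, hxy, hxz, hyz, hx, hy, hz⟩ := not_isAPN_iff.mp hπf
  simp only [Function.comp_apply, ← map_add] at hx hy hz
  have eq_of_map_eq : ∀ {u v}, u ≠ v → π (f (u + a) + f u) = b → π (f (v + a) + f v) = b →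
      f (u + a) + f u = f (v + a) + f v := fun huv hu hv ↦ by
    by_contra hD
    exact Set.disjoint_left.mp h (add_mem_DfStar_of_ne ha huv hD)
      (π.map_eq_map_iff_add_mem_ker.mp (hu.trans hv.symm))
  exact not_isAPN_iff.mpr ⟨a, ha, _, x, y, z, hxy, hxz, hyz, rfl,
    (eq_of_map_eq hxy hx hy).symm, (eq_of_map_eq hxz hx hz).symm⟩ hf

theorem isAPN_comp_iff_disjoint_ker [Finite V] (hf : IsAPN f) :
    IsAPN (π ∘ f) ↔ Disjoint (DfStar f) π.ker :=
  ⟨disjoint_DfStar_ker_of_isAPN_comp, isAPN_comp_of_disjoint_DfStar_ker hf⟩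

end

theorem stmt0_general (n m l : ℕ)
    (f : (Fin n → ZMod 2) → (Fin m → ZMod 2))
    (hf : IsAPN f)
    (π : (Fin m → ZMod 2) →ₗ[ZMod 2] (Fin l → ZMod 2)) :
    IsAPN (fun x => π (f x)) ↔ DfStar f ∩ (LinearMap.ker π : Set (Fin m → ZMod 2)) = ∅ := by
  rw [← Set.disjoint_iff_inter_eq_empty]
  exact isAPN_comp_iff_disjoint_ker (π := π.toAddMonoidHom) hf

theorem stmt0 (n m l : ℕ) (hl : 0 < l) (hlm : l < m)
    (f : (Fin n → ZMod 2) → (Fin m → ZMod 2))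
    (hf : IsAPN f)
    (π : (Fin m → ZMod 2) →ₗ[ZMod 2] (Fin l → ZMod 2))
    (hπ : Function.Surjective π) :
    IsAPN (fun x => π (f x)) ↔ DfStar f ∩ (LinearMap.ker π : Set (Fin m → ZMod 2)) = ∅ :=
  stmt0_general n m l f hf π
end

section
/- Let f : F_2^n → F_2^m and g : F_2^n → F_2 be such that F(x) := (f(x), g(x)) is an APN function from F_2^n to F_2^m ⊕ F_2. Let u be a nonzero element of F_2^m. Then the function x ↦ f(x) + u·g(x) is APN if and only if whenever f(x+t)+f(x)+f(y+t)+f(y) = u for some x, y, t ∈ F_2^n, it holds that g(x+t)+g(x)+g(y+t)+g(y) = 0. -/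
/-!
Write `Δ_t h (x, y) = h (x + t) + h x + h (y + t) + h y` (`secondDiff h t x y`). Since the
solutions of `F (x + t) + F x = b` come in pairs `{x, x + t}`, a function `F` on `𝔽₂ⁿ` is APN iff
`Δ_t F (x, y) = 0` with `t ≠ 0` forces `y ∈ {x, x + t}`, the pairs on which `Δ_t` always vanishes.
For `G = f + g • u` we have `Δ_t G = Δ_t f + (Δ_t g) • u`, which vanishes exactly when either
`Δ_t f = Δ_t g = 0`, i.e. `Δ_t (f, g) = 0`, or `Δ_t f = u` and `Δ_t g = 1`. The criterion rules out
the second alternative, so then `G` inherits the APN property of `(f, g)`; conversely a quadruple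
with `Δ_t f = u` and `Δ_t g = 1` is a zero of `Δ_t G` off the trivial pairs.
-/

lemma ZMod.eq_zero_or_eq_one (c : ZMod 2) : c = 0 ∨ c = 1 := by
  revert c; decide

lemma ZModModule.add_add_self_right_s2 {V : Type*} [AddCommGroup V] [Module (ZMod 2) V] (x t : V) :
    x + t + t = x := by
  rw [add_assoc, ZModModule.add_self, add_zero]

section SecondDiff

variable {V W : Type*} [AddCommGroup V] [AddCommGroup W]

def secondDiff (F : V → W) (t x y : V) : W := F (x + t) + F x + F (y + t) + F y

theorem secondDiff_zero_left [Module (ZMod 2) W] (F : V → W) (x y : V) :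
    secondDiff F 0 x y = 0 := by
  simp only [secondDiff, add_zero, ZModModule.add_self, zero_add]

theorem secondDiff_self [Module (ZMod 2) W] (F : V → W) (t x : V) : secondDiff F t x x = 0 := by
  rw [secondDiff, add_assoc (F (x + t) + F x), ZModModule.add_self]

theorem secondDiff_add_self [Module (ZMod 2) V] [Module (ZMod 2) W] (F : V → W) (t x : V) :
    secondDiff F t x (x + t) = 0 := by
  rw [secondDiff, ZModModule.add_add_self_right_s2, add_comm (F (x + t)) (F x),
    add_assoc (F x + F (x + t)), ZModModule.add_self]

theorem secondDiff_eq_zero_iff [Module (ZMod 2) W] (F : V → W) (t x y : V) :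
    secondDiff F t x y = 0 ↔ F (y + t) + F y = F (x + t) + F x := by
  rw [secondDiff, add_assoc (F (x + t) + F x), ← ZModModule.sub_eq_add, sub_eq_zero, eq_comm]

theorem secondDiff_prodMk {W' : Type*} [AddCommGroup W'] (f : V → W) (g : V → W') (t x y : V) :
    secondDiff (fun z => (f z, g z)) t x y = (secondDiff f t x y, secondDiff g t x y) :=
  rfl

theorem secondDiff_add_smul [Module (ZMod 2) W] (f : V → W) (g : V → ZMod 2) (u : W)
    (t x y : V) :
    secondDiff (fun z => f z + g z • u) t x y = secondDiff f t x y + secondDiff g t x y • u := by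
  simp only [secondDiff, add_smul]
  abel

theorem isAPN_iff_secondDiff_eq_zero [Module (ZMod 2) V] [Finite V] [Module (ZMod 2) W]
    {F : V → W} :
    IsAPN F ↔ ∀ t ≠ 0, ∀ x y, secondDiff F t x y = 0 → y = x ∨ y = x + t := by
  simp only [secondDiff_eq_zero_iff]
  constructor
  · intro hF t ht x y hxy
    by_contra! hne
    have hsol : F (x + t + t) + F (x + t) = F (x + t) + F x := by
      rw [ZModModule.add_add_self_right_s2, add_comm]
    have h3 : 2 < {z | F (z + t) + F z = F (x + t) + F x}.ncard := (Set.two_lt_ncard).2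
      ⟨x, rfl, y, hxy, x + t, hsol, Ne.symm hne.1, by simpa using ht, hne.2⟩
    exact (hF t ht _).not_gt h3
  · intro hF t ht b
    obtain hempty | ⟨x, hx⟩ := Set.eq_empty_or_nonempty {z | F (z + t) + F z = b}
    · simp [hempty]
    have hsub : {z | F (z + t) + F z = b} ⊆ {x, x + t} := fun y hy =>
      hF t ht x y (hy.trans hx.symm)
    calc _ ≤ ({x, x + t} : Set V).ncard := Set.ncard_le_ncard hsub
      _ ≤ 2 := (Set.ncard_insert_le _ _).trans (by simp)

end SecondDiff

theorem isAPN_add_smul_iff {V W : Type*} [AddCommGroup V] [Module (ZMod 2) V] [Finite V]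
    [AddCommGroup W] [Module (ZMod 2) W] {f : V → W} {g : V → ZMod 2}
    (hF : IsAPN fun x => (f x, g x)) {u : W} (hu : u ≠ 0) :
    IsAPN (fun x => f x + g x • u) ↔
      ∀ x y t, secondDiff f t x y = u → secondDiff g t x y = 0 := by
  rw [isAPN_iff_secondDiff_eq_zero] at hF ⊢
  simp only [secondDiff_add_smul]
  constructor
  · intro hG x y t hf
    by_contra hg
    have hg : secondDiff g t x y = 1 := (ZMod.eq_zero_or_eq_one _).resolve_left hg
    have ht : t ≠ 0 := by
      rintro rfl
      exact hu (hf.symm.trans (secondDiff_zero_left f x y))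
    obtain rfl | rfl := hG t ht x y (by rw [hf, hg, one_smul, ZModModule.add_self])
    · exact one_ne_zero (hg.symm.trans (secondDiff_self g t _))
    · exact one_ne_zero (hg.symm.trans (secondDiff_add_self g t _))
  · intro hcrit t ht x y h
    refine hF t ht x y ?_
    rw [secondDiff_prodMk, Prod.mk_eq_zero]
    obtain hg | hg := ZMod.eq_zero_or_eq_one (secondDiff g t x y)
    · rw [hg, zero_smul, add_zero] at h
      exact ⟨h, hg⟩
    · rw [hg, one_smul, ← ZModModule.sub_eq_add, sub_eq_zero] at h
      exact (one_ne_zero (hg.symm.trans (hcrit x y t h))).elim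

theorem stmt2 (n m : ℕ)
    (f : (Fin n → ZMod 2) → (Fin m → ZMod 2))
    (g : (Fin n → ZMod 2) → ZMod 2)
    (hF : IsAPN (fun x => ((f x, g x) : (Fin m → ZMod 2) × ZMod 2)))
    (u : Fin m → ZMod 2) (hu : u ≠ 0) :
    IsAPN (fun x => f x + g x • u) ↔
      ∀ x y t : Fin n → ZMod 2,
        f (x + t) + f x + f (y + t) + f y = u →
        g (x + t) + g x + g (y + t) + g y = 0 :=
  isAPN_add_smul_iff hF hu
end

section
/- Let n = 2k be even with k > 1, and let f(x) = x^{2^n - 2} be the inverse function on F_{2^n}. For a nonzero a ∈ F_{2^n} and b ∈ F_{2^n}: the equation f(x+a) + f(x) = b has 4 solutions in F_{2^n} if and only if b = a^{-1}, and in that case the solution set is {0, a, ωa, ω²a}, where ω is a primitive cube root of unity in F_{2^2} \ F_2 ⊆ F_{2^n}. -/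
/-!
Write `S_b = {x | (x + a)⁻¹ + x⁻¹ = b}`. In characteristic 2 the points `x = 0` and `x = a` lie in
`S_b` exactly when `b = a⁻¹`; every other solution satisfies `(x + a)⁻¹ + x⁻¹ = a / (x (x + a))`,
so the equation becomes the quadratic `b x (x + a) = a`, which has at most two roots. Hence
`|S_b| ≤ 2` unless `b = a⁻¹`, and for `b = a⁻¹` the quadratic is
`x² + a x + a² = (x + ω a)(x + ω² a)`, adding the roots `ω a` and `ω² a`.
-/

open Set

theorem FiniteField.pow_card_sub_two_eq_inv {K : Type*} [Field K] [Finite K]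
    (hK : 2 < Nat.card K) (x : K) : x ^ (Nat.card K - 2) = x⁻¹ := by
  have : Fintype K := Fintype.ofFinite K
  rcases eq_or_ne x 0 with rfl | hx
  · rw [zero_pow (by omega), inv_zero]
  · refine eq_inv_of_mul_eq_one_left ?_
    rw [← pow_succ, show Nat.card K - 2 + 1 = Fintype.card K - 1 by
      rw [Nat.card_eq_fintype_card] at hK ⊢; omega]
    exact FiniteField.pow_card_sub_one_eq_one x hx

section CubeRoot

variable {K : Type*} [Field K] {ω : K}

theorem sq_add_self_add_one_eq_zero_of_pow_three (hω3 : ω ^ 3 = 1) (hω1 : ω ≠ 1) :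
    ω ^ 2 + ω + 1 = 0 :=
  (mul_eq_zero.1 (by linear_combination hω3 : (ω - 1) * (ω ^ 2 + ω + 1) = 0)).resolve_left
    (sub_ne_zero.2 hω1)

theorem ncard_zero_self_mul_cubeRoots_eq_four {a : K} (ha : a ≠ 0) (hω3 : ω ^ 3 = 1)
    (hω1 : ω ≠ 1) :
    ({0, a, ω * a, ω ^ 2 * a} : Set K).ncard = 4 := by
  have hω0 : ω ≠ 0 := by rintro rfl; norm_num at hω3
  have hω2 : ω ^ 2 ≠ 1 := fun h => hω1 (by linear_combination hω3 - ω * h)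
  have hωω2 : ω ≠ ω ^ 2 := fun h =>
    hω1 (mul_left_cancel₀ hω0 (by linear_combination -h))
  have hmul : ∀ {u v : K}, u ≠ v → u * a ≠ v * a := fun h e => h (mul_right_cancel₀ ha e)
  rw [ncard_eq_four]
  refine ⟨0, a, ω * a, ω ^ 2 * a, ha.symm, (mul_ne_zero hω0 ha).symm,
    (mul_ne_zero (pow_ne_zero 2 hω0) ha).symm, ?_, ?_, hmul hωω2, rfl⟩
  · simpa only [one_mul] using hmul hω1.symm
  · simpa only [one_mul] using hmul hω2.symm

end CubeRoot

theorem encard_setOf_mul_mul_add_eq_le_two {K : Type*} [Field K] {a : K} (ha : a ≠ 0) (b : K) :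
    {x : K | b * (x * (x + a)) = a}.encard ≤ 2 := by
  rcases eq_empty_or_nonempty {x : K | b * (x * (x + a)) = a} with h |
    ⟨x, hx : b * (x * (x + a)) = a⟩
  · simp [h]
  have hb : b ≠ 0 := by rintro rfl; exact ha (by simpa using hx.symm)
  have hsub : {y : K | b * (y * (y + a)) = a} ⊆ {x, -x - a} := fun y (hy : _ = a) => by
    have h : b * ((y - x) * (y + x + a)) = 0 := by linear_combination hy - hx
    rcases mul_eq_zero.1 ((mul_eq_zero.1 h).resolve_left hb) with h | h
    · exact Or.inl (sub_eq_zero.1 h)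
    · exact Or.inr (show y = -x - a by linear_combination h)
  calc _ ≤ ({x, -x - a} : Set K).encard := encard_le_encard hsub
    _ ≤ ({-x - a} : Set K).encard + 1 := encard_insert_le _ _
    _ = 2 := by rw [encard_singleton]; rfl

namespace CharTwo

variable {K : Type*} [Field K] [CharP K 2] {a b x : K}

theorem inv_add_inv_eq_iff (hx : x ≠ 0) (hxa : x ≠ a) :
    (x + a)⁻¹ + x⁻¹ = b ↔ b * (x * (x + a)) = a := by
  have hxa' : x + a ≠ 0 := fun h => hxa (CharTwo.add_eq_zero.1 h)
  rw [inv_add_inv hxa' hx, add_right_comm, add_self_eq_zero, zero_add,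
    div_eq_iff (mul_ne_zero hxa' hx), eq_comm, mul_comm (x + a)]

theorem setOf_inv_add_inv_eq_inv {ω : K} (ha : a ≠ 0) (hω3 : ω ^ 3 = 1) (hω1 : ω ≠ 1) :
    {x : K | (x + a)⁻¹ + x⁻¹ = a⁻¹} = {0, a, ω * a, ω ^ 2 * a} := by
  have hω := sq_add_self_add_one_eq_zero_of_pow_three hω3 hω1
  ext x
  simp only [mem_ofPred_eq, mem_insert_iff, mem_singleton_iff]
  rcases eq_or_ne x 0 with rfl | hx
  · simp
  rcases eq_or_ne x a with rfl | hxa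
  · simp [add_self_eq_zero]
  have hfactor : a * (a⁻¹ * (x * (x + a)) - a) = (x + ω * a) * (x + ω ^ 2 * a) := by
    rw [mul_sub, ← mul_assoc, mul_inv_cancel₀ ha, one_mul]
    linear_combination -(a * x) * hω - a ^ 2 * hω3 + (a * x - a ^ 2) * add_self_eq_zero (1 : K)
  rw [inv_add_inv_eq_iff hx hxa, ← sub_eq_zero, ← mul_eq_zero_iff_left ha, hfactor,
    mul_eq_zero, CharTwo.add_eq_zero, CharTwo.add_eq_zero]
  simp [hx, hxa]

theorem encard_setOf_inv_add_inv_le_two (ha : a ≠ 0) (hb : b ≠ a⁻¹) :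
    {x : K | (x + a)⁻¹ + x⁻¹ = b}.encard ≤ 2 := by
  refine (encard_le_encard fun x (hx : _ = b) => ?_).trans (encard_setOf_mul_mul_add_eq_le_two ha b)
  have hx0 : x ≠ 0 := by rintro rfl; simp_all
  have hxa : x ≠ a := by rintro rfl; simp_all [add_self_eq_zero]
  exact (inv_add_inv_eq_iff hx0 hxa).1 hx

theorem ncard_setOf_inv_add_inv_eq_four_iff {ω : K} (ha : a ≠ 0) (hω3 : ω ^ 3 = 1)
    (hω1 : ω ≠ 1) : {x : K | (x + a)⁻¹ + x⁻¹ = b}.ncard = 4 ↔ b = a⁻¹ := by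
  refine ⟨fun h => ?_, fun hb => ?_⟩
  · by_contra hb
    have hfin := finite_of_ncard_ne_zero (h ▸ four_ne_zero)
    have h2 := encard_setOf_inv_add_inv_le_two ha hb
    rw [← hfin.cast_ncard_eq, h] at h2
    exact absurd h2 (by decide)
  · rw [hb, setOf_inv_add_inv_eq_inv ha hω3 hω1, ncard_zero_self_mul_cubeRoots_eq_four ha hω3 hω1]

end CharTwo

theorem stmt4 (k : ℕ) (hk : 1 < k) (n : ℕ) (hn : n = 2 * k)
    (f : GaloisField 2 n → GaloisField 2 n)
    (hf : ∀ x, f x = x ^ (2 ^ n - 2))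
    (ω : GaloisField 2 n) (hω3 : ω ^ 3 = 1) (hω1 : ω ≠ 1)
    (a : GaloisField 2 n) (ha : a ≠ 0) (b : GaloisField 2 n) :
    ({x : GaloisField 2 n | f (x + a) + f x = b}.ncard = 4 ↔ b = a⁻¹) ∧
      (b = a⁻¹ →
        {x : GaloisField 2 n | f (x + a) + f x = b} = {0, a, ω * a, ω ^ 2 * a}) := by
  have hcard : Nat.card (GaloisField 2 n) = 2 ^ n := GaloisField.card 2 n (by omega)
  have hcard_gt : 2 < Nat.card (GaloisField 2 n) := hcard ▸
    calc 2 < 2 ^ 2 := by norm_num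
      _ ≤ 2 ^ n := Nat.pow_le_pow_right two_pos (by omega)
  have hf_inv : f = fun x => x⁻¹ := funext fun x => by
    rw [hf, ← hcard, FiniteField.pow_card_sub_two_eq_inv hcard_gt]
  subst hf_inv
  exact ⟨CharTwo.ncard_setOf_inv_add_inv_eq_four_iff ha hω3 hω1,
    fun hb => hb ▸ CharTwo.setOf_inv_add_inv_eq_inv ha hω3 hω1⟩
end

section
/- Let H be a hyperplane of F_2^n, e₀ ∈ F_2^n \ H, and f, g : H → F_2^m. Define F : F_2^n → F_2^m by F(x) = f(x) for x ∈ H and F(x + e₀) = g(x) for x ∈ H. Then F is APN if and only if: (1) both f and g are APN as functions on H ≅ F_2^{n-1}, and (2) f(x+a)+f(x)+g(y+a)+g(y) ≠ 0 for all x, y ∈ H and all nonzero a ∈ H. -/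
/-!
On the coset `H` the function `F` is `f`, on `H + e₀` it is `g`. In a direction `a ∈ H` the
derivative of `F` stays in each coset, so the equation `F (x + a) + F x = b` has as many solutions
as the corresponding equations for `f` and `g` together. In a direction `c + e₀ ∉ H` it swaps the
cosets, and its solutions come in pairs `x, x + c + e₀` with `x ∈ H` solving `g (x + c) + f x = b`;
so this direction is harmless exactly when `x ↦ g (x + c) + f x` is injective, which is the mixed
condition in disguise. The mixed condition also says that the derivatives of `f` and `g` in a
direction `a` never take a common value, so then the two counts cannot both be positive.
-/
open Module Function ZModModule

theorem Function.injective_iff_forall_ncard_le_one {α β : Type*} [Finite α] {φ : α → β} :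
    Injective φ ↔ ∀ b, {x | φ x = b}.ncard ≤ 1 := by
  simp only [Set.ncard_le_one (Set.toFinite _), Set.mem_ofPred_eq]
  exact ⟨fun h b x hx y hy => h (hx.trans hy.symm), fun h x y hxy => h _ x rfl y hxy.symm⟩

section CharTwo

variable {U W : Type*} [AddCommGroup U] [AddCommGroup W] [Module (ZMod 2) W]

theorem ZModModule.eq_of_add_eq_zero {u v : W} (h : u + v = 0) : u = v := by
  rwa [add_eq_zero_iff_eq_neg, neg_eq_self] at h

/-- A collision `x ≠ x' = x + a` of `x ↦ g (x + c) + f x` is a zero of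
`f (x + a) + f x + g (y + a) + g y` for `y = x + c`. -/
theorem forall_add_add_add_ne_zero_iff_injective [Module (ZMod 2) U] {f g : U → W} :
    (∀ x y a : U, a ≠ 0 → f (x + a) + f x + g (y + a) + g y ≠ 0) ↔
      ∀ c : U, Injective fun x => g (x + c) + f x := by
  constructor
  · intro h c x x' hxx'
    by_contra hne
    simp only at hxx'
    apply h x' (x' + c) (x + x') (fun h0 => hne (eq_of_add_eq_zero h0))
    rw [show x' + (x + x') = x by rw [add_left_comm, add_self, add_zero],
      show x' + c + (x + x') = x + c by rw [add_right_comm, add_left_comm, add_self, add_zero]]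
    calc f x + f x' + g (x + c) + g (x' + c)
        = (g (x + c) + f x) + (g (x' + c) + f x') := by abel
      _ = 0 := by rw [hxx', add_self]
  · intro h x y a ha hsum
    have hy : x + (x + y) = y := by rw [← add_assoc, add_self, zero_add]
    have hya : x + a + (x + y) = y + a := by
      rw [add_comm y, ← add_assoc, add_right_comm x a x, add_self, zero_add]
    have hcollide : x = x + a := h (x + y) <| by
      simp only [hy, hya]
      refine eq_of_add_eq_zero ?_
      calc g y + f x + (g (y + a) + f (x + a))
          = f (x + a) + f x + g (y + a) + g y := by abel
        _ = 0 := hsum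
    exact ha (by simpa using hcollide.symm)

theorem ncard_add_ncard_le_two_of_isAPN [Finite U] {f g : U → W} (hf : IsAPN f) (hg : IsAPN g)
    (hfg : ∀ x y a : U, a ≠ 0 → f (x + a) + f x + g (y + a) + g y ≠ 0)
    {a : U} (ha : a ≠ 0) (b : W) :
    {x | f (x + a) + f x = b}.ncard + {y | g (y + a) + g y = b}.ncard ≤ 2 := by
  rcases Set.eq_empty_or_nonempty {x | f (x + a) + f x = b} with hempty | ⟨x, hx⟩
  · simpa [hempty] using hg a ha b
  · have hgempty : {y | g (y + a) + g y = b} = ∅ := by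
      refine Set.eq_empty_iff_forall_notMem.mpr fun y (hy : g (y + a) + g y = b) => ?_
      apply hfg x y a ha
      rw [add_assoc, hx, hy, add_self]
    simpa [hgempty] using hf a ha b

end CharTwo

section IndexTwo

variable {V : Type*} [AddCommGroup V] [Module (ZMod 2) V] {H : Submodule (ZMod 2) V} {e₀ : V}

theorem Submodule.add_mem_of_notMem_of_finrank_eq [Module.Finite (ZMod 2) V]
    (hH : finrank (ZMod 2) H = finrank (ZMod 2) V - 1) (he₀ : e₀ ∉ H) {v : V} (hv : v ∉ H) :
    v + e₀ ∈ H := by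
  have htop : H ⊔ Submodule.span (ZMod 2) {e₀} = ⊤ := by
    apply Submodule.eq_top_of_finrank_eq
    have := Submodule.finrank_le (H ⊔ Submodule.span (ZMod 2) {e₀})
    rw [Submodule.finrank_sup_span_singleton he₀] at this ⊢
    omega
  obtain ⟨y, hy, z, hz, rfl⟩ := Submodule.mem_sup.mp (htop ▸ Submodule.mem_top : v ∈ _)
  obtain ⟨t, rfl⟩ := Submodule.mem_span_singleton.mp hz
  rcases (by decide : ∀ t : ZMod 2, t = 0 ∨ t = 1) t with rfl | rfl
  · simp_all
  · simpa [add_assoc, add_self] using hy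

variable (he₀ : e₀ ∉ H) (hcover : ∀ v ∉ H, v + e₀ ∈ H)
include he₀ hcover

theorem ncard_setOf_eq_ncard_add_ncard [Finite V] (P : V → Prop) :
    {v | P v}.ncard = {x : H | P x}.ncard + {x : H | P (x + e₀)}.ncard := by
  have hshift : Injective fun x : H => (x : V) + e₀ := fun x y hxy =>
    Subtype.val_injective (add_right_cancel hxy)
  have hsplit : {v | P v} = (Subtype.val '' {x : H | P x}) ∪
      ((fun x : H => (x : V) + e₀) '' {x : H | P (x + e₀)}) := by
    ext v
    simp only [Set.mem_ofPred_eq, Set.mem_union, Set.mem_image]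
    refine ⟨fun hv => ?_, by rintro (⟨x, hx, rfl⟩ | ⟨x, hx, rfl⟩) <;> exact hx⟩
    by_cases hvH : v ∈ H
    · exact Or.inl ⟨⟨v, hvH⟩, hv, rfl⟩
    · exact Or.inr ⟨⟨v + e₀, hcover v hvH⟩, by simpa [add_assoc, add_self] using hv,
        by simp [add_assoc, add_self]⟩
  have hdisj : Disjoint (Subtype.val '' {x : H | P x})
      ((fun x : H => (x : V) + e₀) '' {x : H | P (x + e₀)}) := by
    refine Set.disjoint_left.mpr ?_
    rintro _ ⟨x, -, rfl⟩ ⟨y, -, hxy⟩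
    dsimp only at hxy
    apply he₀
    rw [show e₀ = (x : V) - y by rw [← hxy]; abel]
    exact H.sub_mem x.2 y.2
  rw [hsplit, Set.ncard_union_eq hdisj, Set.ncard_image_of_injective _ Subtype.val_injective,
    Set.ncard_image_of_injective _ hshift]

theorem forall_ne_zero_iff_of_cover {R : V → Prop} :
    (∀ A : V, A ≠ 0 → R A) ↔ (∀ a : H, a ≠ 0 → R a) ∧ ∀ c : H, R (c + e₀) := by
  refine ⟨fun h => ⟨fun a ha => h a (by simpa using ha), fun c => h _ fun h0 => he₀ ?_⟩,
    fun ⟨hmem, hcoset⟩ A hA => ?_⟩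
  · rw [eq_neg_of_add_eq_zero_right h0]
    exact H.neg_mem c.2
  · by_cases hAH : A ∈ H
    · exact hmem ⟨A, hAH⟩ (by simpa using hA)
    · simpa [add_assoc, add_self] using hcoset ⟨A + e₀, hcover A hAH⟩

variable {W : Type*} [AddCommGroup W] {f g : H → W} {F : V → W}
  (hF1 : ∀ x : H, F x = f x) (hF2 : ∀ x : H, F (x + e₀) = g x)
include hF1 hF2

theorem ncard_derivative_eq_of_mem [Finite V] (a : H) (b : W) :
    {x | F (x + a) + F x = b}.ncard =
      {x : H | f (x + a) + f x = b}.ncard + {x : H | g (x + a) + g x = b}.ncard := by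
  rw [ncard_setOf_eq_ncard_add_ncard he₀ hcover]
  congr 2
  · ext x
    simp only [Set.mem_ofPred_eq, ← Submodule.coe_add, hF1]
  · ext x
    simp only [Set.mem_ofPred_eq]
    rw [show (x : V) + e₀ + a = ↑(x + a) + e₀ by push_cast; abel, hF2, hF2]

theorem ncard_derivative_eq_of_notMem [Finite V] (c : H) (b : W) :
    {x | F (x + (c + e₀)) + F x = b}.ncard = 2 * {x : H | g (x + c) + f x = b}.ncard := by
  rw [ncard_setOf_eq_ncard_add_ncard he₀ hcover]
  have hbase : {x : H | F (x + (c + e₀)) + F x = b} = {x : H | g (x + c) + f x = b} := by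
    ext x
    simp only [Set.mem_ofPred_eq]
    rw [show (x : V) + (c + e₀) = ↑(x + c) + e₀ by push_cast; abel, hF2, hF1]
  have hshifted : {x : H | F (x + e₀ + (c + e₀)) + F (x + e₀) = b} =
      (· + c) ⁻¹' {x : H | g (x + c) + f x = b} := by
    ext x
    simp only [Set.mem_ofPred_eq, Set.mem_preimage]
    rw [show (x : V) + e₀ + (c + e₀) = ↑(x + c) + (e₀ + e₀) by push_cast; abel, add_self,
      add_zero, hF1, hF2, add_assoc x c c, add_self, add_zero, add_comm]
  rw [hbase, hshifted, Set.ncard_preimage_of_injective_subset_range (add_left_injective c)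
    (by simp [(add_right_surjective c).range_eq]), two_mul]

theorem isAPN_iff_of_eq_on_cosets [Finite V] :
    IsAPN F ↔ (∀ a : H, a ≠ 0 → ∀ b,
      {x : H | f (x + a) + f x = b}.ncard + {x : H | g (x + a) + g x = b}.ncard ≤ 2) ∧
      ∀ c : H, Injective fun x => g (x + c) + f x := by
  unfold IsAPN
  rw [forall_ne_zero_iff_of_cover he₀ hcover]
  refine and_congr (forall₂_congr fun a _ => forall_congr' fun b => ?_) (forall_congr' fun c => ?_)
  · rw [ncard_derivative_eq_of_mem he₀ hcover hF1 hF2]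
  · rw [injective_iff_forall_ncard_le_one]
    refine forall_congr' fun b => ?_
    rw [ncard_derivative_eq_of_notMem he₀ hcover hF1 hF2]
    omega

end IndexTwo

theorem stmt6_general (n m : ℕ)
    (H : Submodule (ZMod 2) (Fin n → ZMod 2))
    (hH : Module.finrank (ZMod 2) H = n - 1)
    (e₀ : Fin n → ZMod 2) (he₀ : e₀ ∉ H)
    (f g : H → (Fin m → ZMod 2))
    (F : (Fin n → ZMod 2) → (Fin m → ZMod 2))
    (hF1 : ∀ x : H, F (x : Fin n → ZMod 2) = f x)
    (hF2 : ∀ x : H, F ((x : Fin n → ZMod 2) + e₀) = g x) :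
    IsAPN F ↔
      (IsAPN f ∧ IsAPN g) ∧
        ∀ x y a : H, a ≠ 0 → f (x + a) + f x + g (y + a) + g y ≠ 0 := by
  have hcover : ∀ v ∉ H, v + e₀ ∈ H := fun v hv =>
    H.add_mem_of_notMem_of_finrank_eq (by rwa [finrank_fin_fun]) he₀ hv
  rw [isAPN_iff_of_eq_on_cosets he₀ hcover hF1 hF2, ← forall_add_add_add_ne_zero_iff_injective]
  constructor
  · rintro ⟨hsum, hfg⟩
    exact ⟨⟨fun a ha b => (Nat.le_add_right _ _).trans (hsum a ha b),
      fun a ha b => (Nat.le_add_left _ _).trans (hsum a ha b)⟩, hfg⟩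
  · rintro ⟨⟨hf, hg⟩, hfg⟩
    exact ⟨fun a ha => ncard_add_ncard_le_two_of_isAPN hf hg hfg ha, hfg⟩

theorem stmt6 (n m : ℕ) (hn : 3 ≤ n)
    (H : Submodule (ZMod 2) (Fin n → ZMod 2))
    (hH : Module.finrank (ZMod 2) H = n - 1)
    (e₀ : Fin n → ZMod 2) (he₀ : e₀ ∉ H)
    (f g : H → (Fin m → ZMod 2))
    (F : (Fin n → ZMod 2) → (Fin m → ZMod 2))
    (hF1 : ∀ x : H, F (x : Fin n → ZMod 2) = f x)
    (hF2 : ∀ x : H, F ((x : Fin n → ZMod 2) + e₀) = g x) :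
    IsAPN F ↔
      (IsAPN f ∧ IsAPN g) ∧
        ∀ x y a : H, a ≠ 0 → f (x + a) + f x + g (y + a) + g y ≠ 0 :=
  stmt6_general n m H hH e₀ he₀ f g F hF1 hF2
end

section
/- The function G(x) = x³ + Tr(x)·L(x) on F_{2^n} (L linear) is APN if and only if for every nonzero a ∈ F_{2^n} with Tr(a) = 0, the equation x²a + a²x + L(a) = 0 has no solution x with Tr(x) = 1. -/
noncomputable def Tr (n : ℕ) : GaloisField 2 n → ZMod 2 :=
  Algebra.trace (ZMod 2) (GaloisField 2 n)

section APN

variable {V W : Type*} [AddCommGroup V] [AddCommGroup W]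

theorem ncard_fiber_le_two_iff_ker_subset [Finite V] (φ : V →+ W) {a : V} (ha : a ≠ 0)
    (hφa : φ a = 0) :
    (∀ b, {x | φ x = b}.ncard ≤ 2) ↔ ∀ x, φ x = 0 → x = 0 ∨ x = a := by
  constructor
  · intro hfiber x hx
    by_contra! hxa
    have h3 : 2 < {y | φ y = 0}.ncard := (Set.two_lt_ncard_iff).mpr
      ⟨0, a, x, map_zero φ, hφa, hx, ha.symm, hxa.1.symm, hxa.2.symm⟩
    exact absurd (hfiber 0) (not_le.mpr h3)
  · intro hker b
    rcases Set.eq_empty_or_nonempty {x | φ x = b} with hempty | ⟨x₀, hx₀⟩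
    · simp [hempty]
    have hsub : {x | φ x = b} ⊆ {x₀, x₀ + a} := by
      intro y hy
      have hdiff : φ (y - x₀) = 0 := by rw [map_sub, hy, hx₀, sub_self]
      rcases hker _ hdiff with h | h
      · exact Or.inl (sub_eq_zero.mp h)
      · exact Or.inr (by rw [← h, add_sub_cancel]; rfl)
    calc {x | φ x = b}.ncard ≤ ({x₀, x₀ + a} : Set V).ncard := Set.ncard_le_ncard hsub
      _ = 2 := Set.ncard_pair (by simpa using ha)

theorem isAPN_iff_of_derivative_eq [Finite V] {G : V → W} (φ : V → V →+ W) (c : V → W)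
    (hG : ∀ a x, G (x + a) + G x = φ a x + c a) (hφ : ∀ a, φ a a = 0) :
    IsAPN G ↔ ∀ a, a ≠ 0 → ∀ x, φ a x = 0 → x = 0 ∨ x = a := by
  refine forall₂_congr fun a ha => ?_
  rw [← ncard_fiber_le_two_iff_ker_subset (φ a) ha (hφ a)]
  simp_rw [hG, ← eq_sub_iff_add_eq]
  exact ⟨fun h b => by simpa using h (b + c a), fun h b => h (b - c a)⟩

end APN

section Trace

variable {n : ℕ}

theorem tr_add (x y : GaloisField 2 n) : Tr n (x + y) = Tr n x + Tr n y :=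
  map_add (Algebra.trace (ZMod 2) (GaloisField 2 n)) x y

theorem tr_zero : Tr n (0 : GaloisField 2 n) = 0 :=
  map_zero (Algebra.trace (ZMod 2) (GaloisField 2 n))

theorem zmod_two_eq_zero_or_one : ∀ t : ZMod 2, t = 0 ∨ t = 1 := by decide

variable (L : GaloisField 2 n →ₗ[ZMod 2] GaloisField 2 n)

noncomputable def derivLinearPart (a : GaloisField 2 n) : GaloisField 2 n →+ GaloisField 2 n :=
  AddMonoidHom.mk' (fun x => x ^ 2 * a + x * a ^ 2 + Tr n x • L a + Tr n a • L x) fun x y => by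
    simp only [CharTwo.add_sq, tr_add, add_smul, map_add, smul_add, add_mul]
    abel

theorem derivLinearPart_apply (a x : GaloisField 2 n) :
    derivLinearPart L a x = x ^ 2 * a + x * a ^ 2 + Tr n x • L a + Tr n a • L x :=
  rfl

theorem derivLinearPart_self (a : GaloisField 2 n) : derivLinearPart L a a = 0 := by
  rw [derivLinearPart_apply, CharTwo.add_cancel_right, mul_comm (a ^ 2), CharTwo.add_self_eq_zero]

theorem derivLinearPart_comm (a x : GaloisField 2 n) :
    derivLinearPart L a x = derivLinearPart L x a := by
  simp only [derivLinearPart_apply]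
  ring

theorem derivLinearPart_of_tr_eq_zero_of_tr_eq_zero {a x : GaloisField 2 n} (ha : Tr n a = 0)
    (hx : Tr n x = 0) : derivLinearPart L a x = x * a * (x + a) := by
  simp only [derivLinearPart_apply, ha, hx, zero_smul, add_zero]
  ring

theorem derivLinearPart_of_tr_eq_zero_of_tr_eq_one {a x : GaloisField 2 n} (ha : Tr n a = 0)
    (hx : Tr n x = 1) : derivLinearPart L a x = x ^ 2 * a + a ^ 2 * x + L a := by
  simp only [derivLinearPart_apply, ha, hx, zero_smul, one_smul, add_zero]
  ring

theorem derivative_eq_derivLinearPart_add {G : GaloisField 2 n → GaloisField 2 n}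
    (hG : ∀ x, G x = x ^ 3 + Tr n x • L x) (a x : GaloisField 2 n) :
    G (x + a) + G x = derivLinearPart L a x + G a := by
  simp only [hG, derivLinearPart_apply, tr_add, map_add, Algebra.smul_def]
  linear_combination (x ^ 3 + x ^ 2 * a + x * a ^ 2 + algebraMap (ZMod 2) _ (Tr n x) * L x) *
    CharTwo.two_eq_zero (R := GaloisField 2 n)

theorem eq_zero_of_derivLinearPart_eq_zero
    (H : ∀ a : GaloisField 2 n, a ≠ 0 → Tr n a = 0 →
      ∀ x : GaloisField 2 n, Tr n x = 1 → x ^ 2 * a + a ^ 2 * x + L a ≠ 0)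
    {a x : GaloisField 2 n} (ha : Tr n a = 1) (hx : Tr n x = 0)
    (hφ : derivLinearPart L a x = 0) : x = 0 := by
  by_contra hx₀
  refine H x hx₀ hx a ha ?_
  rwa [← derivLinearPart_of_tr_eq_zero_of_tr_eq_one L hx ha, derivLinearPart_comm]

theorem derivLinearPart_ker_iff :
    (∀ a : GaloisField 2 n, a ≠ 0 → ∀ x, derivLinearPart L a x = 0 → x = 0 ∨ x = a) ↔
      ∀ a : GaloisField 2 n, a ≠ 0 → Tr n a = 0 →
        ∀ x : GaloisField 2 n, Tr n x = 1 → x ^ 2 * a + a ^ 2 * x + L a ≠ 0 := by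
  constructor
  · intro hker a ha hTa x hTx heq
    rcases hker a ha x (by rw [derivLinearPart_of_tr_eq_zero_of_tr_eq_one L hTa hTx, heq]) with
      rfl | rfl
    · simp [tr_zero] at hTx
    · simp [hTa] at hTx
  · intro H a ha x hφ
    rcases zmod_two_eq_zero_or_one (Tr n a) with hTa | hTa <;>
      rcases zmod_two_eq_zero_or_one (Tr n x) with hTx | hTx
    · rw [derivLinearPart_of_tr_eq_zero_of_tr_eq_zero L hTa hTx, mul_eq_zero, mul_eq_zero,
        CharTwo.add_eq_zero] at hφ
      tauto
    · exact absurd (derivLinearPart_of_tr_eq_zero_of_tr_eq_one L hTa hTx ▸ hφ)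
        (H a ha hTa x hTx)
    · exact Or.inl (eq_zero_of_derivLinearPart_eq_zero L H hTa hTx hφ)
    · have hsum : Tr n (x + a) = 0 := by rw [tr_add, hTx, hTa]; decide
      have hφsum : derivLinearPart L a (x + a) = 0 := by
        rw [map_add, hφ, derivLinearPart_self, add_zero]
      exact Or.inr <| CharTwo.add_eq_zero.mp <|
        eq_zero_of_derivLinearPart_eq_zero L H hTa hsum hφsum

end Trace

theorem stmt13 (n : ℕ)
    (L : GaloisField 2 n →ₗ[ZMod 2] GaloisField 2 n)
    (G : GaloisField 2 n → GaloisField 2 n)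
    (hG : ∀ x, G x = x ^ 3 + Tr n x • L x) :
    IsAPN G ↔
      ∀ a : GaloisField 2 n, a ≠ 0 → Tr n a = 0 →
        ∀ x : GaloisField 2 n, Tr n x = 1 →
          x ^ 2 * a + a ^ 2 * x + L a ≠ 0 := by
  rw [isAPN_iff_of_derivative_eq (derivLinearPart L) G (derivative_eq_derivLinearPart_add L hG)
    (derivLinearPart_self L)]
  exact derivLinearPart_ker_iff L
end

section
/- Let G(x) = x³ + Tr(x)·L(x) on F_{2^n} with L linear. Then G is APN if and only if Σ_{x ∈ F_{2^n} \ {0,1}} (−1)^{Tr(x²L(x²+x)/(x²+x)³)} − (1/2)·Σ_{x ∈ F_{2^n} \ {0,1}} (−1)^{Tr(L(x²+x)/(x²+x)³)} = 2^{n−1} − 1. -/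
open Algebra (trace)
open Finset

section AffineDerivative

variable {V W : Type*} [AddCommGroup V] [Finite V] [AddCommGroup W]

theorem AddMonoidHom.ncard_fiber_le_ncard_ker (φ : V →+ W) (b : W) :
    {x | φ x = b}.ncard ≤ {x | φ x = 0}.ncard := by
  rcases Set.eq_empty_or_nonempty {x | φ x = b} with h | ⟨x₀, hx₀⟩
  · simp [h]
  refine Set.ncard_le_ncard_of_injOn (· - x₀) (fun x hx => ?_) (fun x _ y _ h => sub_left_inj.mp h)
    (Set.toFinite _)
  simp_all

theorem isAPN_iff_of_affine_derivative {f : V → W} (Λ : V → V →+ W)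
    (hf : ∀ a x, f (x + a) + f x = Λ a x + f a) (hΛ : ∀ a, Λ a a = 0) :
    IsAPN f ↔ ∀ a ≠ 0, ∀ z, Λ a z = 0 → z = 0 ∨ z = a := by
  constructor
  · intro h a ha z hz
    by_contra! hz'
    have hsub : ({0, a, z} : Set V) ⊆ {x | f (x + a) + f x = f a} := by
      rintro x (rfl | rfl | rfl) <;> simp [hf, hΛ, hz]
    have h3 : ({0, a, z} : Set V).ncard = 3 := by
      rw [Set.ncard_insert_of_notMem (by simp [ha.symm, hz'.1.symm]), Set.ncard_pair hz'.2.symm]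
    have := Set.ncard_le_ncard hsub
    have := h a ha (f a)
    omega
  · intro h a ha b
    have hfib : {x | f (x + a) + f x = b} = {x | Λ a x = b - f a} := by
      ext x; simp [hf, eq_sub_iff_add_eq]
    calc {x | f (x + a) + f x = b}.ncard
        ≤ {x | Λ a x = 0}.ncard := hfib ▸ (Λ a).ncard_fiber_le_ncard_ker _
      _ ≤ ({0, a} : Set V).ncard := Set.ncard_le_ncard fun z hz => h a ha z hz
      _ ≤ 2 := (Set.ncard_insert_le _ _).trans (by simp)

end AffineDerivative

lemma neg_one_pow_val_add_sub (s t : ZMod 2) :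
    (-1 : ℚ) ^ s.val + (-1) ^ (s + t).val - (-1) ^ t.val = if t = 0 ∧ s = 1 then -3 else 1 := by
  have cases : ∀ r : ZMod 2, r = 0 ∨ r = 1 := by decide
  have h1 : (1 : ZMod 2).val = 1 := rfl
  have h2 : (1 + 1 : ZMod 2) = 0 := rfl
  rcases cases s with rfl | rfl <;> rcases cases t with rfl | rfl <;>
    simp only [h2, add_zero, zero_add] <;> norm_num [h1]

section FiniteFieldCharTwo

variable {F : Type*} [Field F] [Algebra (ZMod 2) F]

local instance : CharP F 2 := charP_of_injective_algebraMap' (ZMod 2) 2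

theorem trace_sq [Finite F] (x : F) : trace (ZMod 2) F (x ^ 2) = trace (ZMod 2) F x := by
  have := Fintype.ofFinite F
  simpa [ZMod.card] using
    Algebra.trace_eq_of_algEquiv (FiniteField.frobeniusAlgEquivOfAlgebraic (ZMod 2) F) x

theorem trace_sq_add_self [Finite F] (x : F) : trace (ZMod 2) F (x ^ 2 + x) = 0 := by
  rw [map_add, trace_sq, CharTwo.add_self_eq_zero]

theorem sq_add_self_eq_zero_iff {x : F} : x ^ 2 + x = 0 ↔ x = 0 ∨ x = 1 := by
  rw [show x ^ 2 + x = x * (x + 1) by ring, mul_eq_zero, CharTwo.add_eq_zero]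

variable (F) in
def artinSchreier : F →+ F :=
  AddMonoidHom.mk' (fun x => x ^ 2 + x) fun x y => by rw [CharTwo.add_sq]; ring

/-- Both subgroups have index `2`: the kernel of `artinSchreier` is `{0, 1}` and the trace is
onto `ZMod 2`. -/
theorem range_artinSchreier [Finite F] :
    (artinSchreier F).range = (trace (ZMod 2) F).toAddMonoidHom.ker := by
  have hker : Nat.card (artinSchreier F).ker = 2 := by
    rw [← SetLike.coe_sort_coe, Nat.card_coe_set_eq]
    convert Set.ncard_pair (zero_ne_one (α := F))
    ext x; simp [artinSchreier, sq_add_self_eq_zero_iff]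
  have hrange : Nat.card (trace (ZMod 2) F).toAddMonoidHom.range = 2 := by
    rw [AddMonoidHom.range_eq_top.mpr (Algebra.trace_surjective (ZMod 2) F), AddSubgroup.card_top,
      Nat.card_zmod]
  have h₁ := (artinSchreier F).ker.card_mul_index
  have h₂ := (trace (ZMod 2) F).toAddMonoidHom.ker.card_mul_index
  rw [AddSubgroup.index_ker, hker] at h₁
  rw [AddSubgroup.index_ker, hrange] at h₂
  refine AddSubgroup.eq_of_le_of_card_ge ?_ (by omega)
  rintro _ ⟨x, rfl⟩
  exact trace_sq_add_self x

theorem exists_sq_add_self_eq_iff [Finite F] {c : F} :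
    (∃ x, x ^ 2 + x = c) ↔ trace (ZMod 2) F c = 0 := by
  rw [← LinearMap.toAddMonoidHom_coe, ← AddMonoidHom.mem_ker, ← range_artinSchreier]
  rfl

theorem forall_trace_eq_zero_iff [Finite F] {P : F → Prop} :
    (∀ u, trace (ZMod 2) F u = 0 → P u) ↔ ∀ x, P (x ^ 2 + x) := by
  simp only [← exists_sq_add_self_eq_iff]
  grind

theorem trace_sq_mul_eq_trace_mul [Finite F] {x u y c : F} (hx : x ^ 2 + x = u)
    (hy : y ^ 2 + y = c) : trace (ZMod 2) F (x ^ 2 * c) = trace (ZMod 2) F (u * y) := by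
  rw [← hx, ← hy, show x ^ 2 * (y ^ 2 + y) = (x * y) ^ 2 + x ^ 2 * y by ring, map_add, trace_sq,
    ← map_add]
  congr 1
  ring

section Polar

variable (L : F →ₗ[ZMod 2] F)

noncomputable def polarForm (a : F) : F →+ F :=
  AddMonoidHom.mk'
    (fun x => a * x ^ 2 + a ^ 2 * x + trace (ZMod 2) F x • L a + trace (ZMod 2) F a • L x)
    fun x y => by simp only [CharTwo.add_sq, map_add, add_smul, smul_add]; ring

lemma polarForm_apply (a x : F) : polarForm L a x =
    a * x ^ 2 + a ^ 2 * x + trace (ZMod 2) F x • L a + trace (ZMod 2) F a • L x := rfl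

lemma polarForm_comm (a x : F) : polarForm L a x = polarForm L x a := by
  simp only [polarForm_apply]; ring

lemma polarForm_self (a : F) : polarForm L a a = 0 := by
  rw [polarForm_apply]
  linear_combination (a ^ 3 + trace (ZMod 2) F a • L a) * CharTwo.two_eq_zero (R := F)

lemma apply_add_add_apply_eq_polarForm_add {G : F → F}
    (hG : ∀ x, G x = x ^ 3 + trace (ZMod 2) F x • L x) (a x : F) :
    G (x + a) + G x = polarForm L a x + G a := by
  simp only [hG, polarForm_apply, map_add, add_smul, smul_add]
  linear_combination (x ^ 3 + a * x ^ 2 + a ^ 2 * x + trace (ZMod 2) F x • L x) *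
    CharTwo.two_eq_zero (R := F)

theorem forall_polarForm_eq_zero_iff :
    (∀ a ≠ 0, ∀ z, polarForm L a z = 0 → z = 0 ∨ z = a) ↔
      ∀ u, trace (ZMod 2) F u = 0 → u ≠ 0 → ∀ z, polarForm L u z = 0 → trace (ZMod 2) F z = 0 := by
  constructor
  · intro h u htu hu z hz
    rcases h u hu z hz with rfl | rfl
    exacts [map_zero _, htu]
  intro h a ha z hz
  by_cases hta : trace (ZMod 2) F a = 0
  · by_cases htz : trace (ZMod 2) F z = 0
    · rw [polarForm_apply, hta, htz, zero_smul, zero_smul, add_zero, add_zero,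
        show a * z ^ 2 + a ^ 2 * z = a * (z * (z + a)) by ring] at hz
      simpa [ha, CharTwo.add_eq_zero] using hz
    · exact absurd (h a hta ha z hz) htz
  by_contra! hz'
  by_cases htz : trace (ZMod 2) F z = 0
  · exact hta (h z htz hz'.1 a (polarForm_comm L a z ▸ hz))
  · have htu : trace (ZMod 2) F (z + a) = 0 := by
      rw [map_add, Fin.eq_one_of_ne_zero _ htz, Fin.eq_one_of_ne_zero _ hta]; rfl
    refine hta (h (z + a) htu (by rw [Ne, CharTwo.add_eq_zero]; exact hz'.2) a ?_)
    rw [polarForm_comm, map_add, hz, polarForm_self, add_zero]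

theorem exists_polarForm_eq_zero_iff [Finite F] {x u : F} (hu : u ≠ 0) (hx : x ^ 2 + x = u) :
    (∃ z, trace (ZMod 2) F z = 1 ∧ polarForm L u z = 0) ↔
      trace (ZMod 2) F (L u / u ^ 3) = 0 ∧ trace (ZMod 2) F (x ^ 2 * (L u / u ^ 3)) = 1 := by
  have htu : trace (ZMod 2) F u = 0 := hx ▸ trace_sq_add_self x
  have key : ∀ z, trace (ZMod 2) F z = 1 →
      (polarForm L u z = 0 ↔ (z / u) ^ 2 + z / u = L u / u ^ 3) := by
    intro z hz
    have : (z / u) ^ 2 + z / u = (u * z ^ 2 + u ^ 2 * z) / u ^ 3 := by field_simp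
    rw [polarForm_apply, htu, hz, zero_smul, one_smul, add_zero, CharTwo.add_eq_zero, this,
      div_left_inj' (pow_ne_zero 3 hu)]
  constructor
  · rintro ⟨z, hz, hB⟩
    have hy := (key z hz).1 hB
    refine ⟨hy ▸ trace_sq_add_self _, ?_⟩
    rw [trace_sq_mul_eq_trace_mul hx hy, mul_div_cancel₀ z hu, hz]
  · rintro ⟨hc, hxc⟩
    obtain ⟨y, hy⟩ := exists_sq_add_self_eq_iff.mpr hc
    have hz : trace (ZMod 2) F (u * y) = 1 := by rw [← trace_sq_mul_eq_trace_mul hx hy, hxc]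
    refine ⟨u * y, hz, (key _ hz).2 ?_⟩
    rwa [mul_div_cancel_left₀ y hu]

theorem isAPN_iff_forall_not_trace [Finite F] {G : F → F}
    (hG : ∀ x, G x = x ^ 3 + trace (ZMod 2) F x • L x) :
    IsAPN G ↔ ∀ x : F, x ≠ 0 ∧ x ≠ 1 →
      ¬ (trace (ZMod 2) F (L (x ^ 2 + x) / (x ^ 2 + x) ^ 3) = 0 ∧
        trace (ZMod 2) F (x ^ 2 * (L (x ^ 2 + x) / (x ^ 2 + x) ^ 3)) = 1) := by
  rw [isAPN_iff_of_affine_derivative (polarForm L) (apply_add_add_apply_eq_polarForm_add L hG)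
    (polarForm_self L), forall_polarForm_eq_zero_iff, forall_trace_eq_zero_iff]
  refine forall_congr' fun x => ?_
  rw [← not_or, ← sq_add_self_eq_zero_iff]
  refine imp_congr_right fun hx => ?_
  have h01 : ∀ t : ZMod 2, t = 0 ↔ ¬ t = 1 := by decide
  rw [← exists_polarForm_eq_zero_iff L hx rfl, not_exists]
  exact forall_congr' fun z => by rw [h01, not_and, imp_not_comm]

end Polar

section Sums

variable [Fintype F] [DecidableEq F]

theorem sum_neg_one_pow_trace_eq (φ : F → F) :
    (∑ x ∈ univ.filter (fun x : F => x ≠ 0 ∧ x ≠ 1),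
        (-1 : ℚ) ^ (trace (ZMod 2) F (x ^ 2 * φ (x ^ 2 + x))).val)
      - 1 / 2 * (∑ x ∈ univ.filter (fun x : F => x ≠ 0 ∧ x ≠ 1),
        (-1 : ℚ) ^ (trace (ZMod 2) F (φ (x ^ 2 + x))).val)
      = Fintype.card F / 2 - 1 - 2 * #{x ∈ univ.filter (fun x : F => x ≠ 0 ∧ x ≠ 1) |
          trace (ZMod 2) F (φ (x ^ 2 + x)) = 0 ∧ trace (ZMod 2) F (x ^ 2 * φ (x ^ 2 + x)) = 1} := by
  set S := univ.filter (fun x : F => x ≠ 0 ∧ x ≠ 1)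
  set P := fun x : F =>
    trace (ZMod 2) F (φ (x ^ 2 + x)) = 0 ∧ trace (ZMod 2) F (x ^ 2 * φ (x ^ 2 + x)) = 1
  set h := fun x : F => (-1 : ℚ) ^ (trace (ZMod 2) F (x ^ 2 * φ (x ^ 2 + x))).val
    - 1 / 2 * (-1 : ℚ) ^ (trace (ZMod 2) F (φ (x ^ 2 + x))).val
  have hmem : ∀ x ∈ S, x + 1 ∈ S := by
    simp only [S, mem_filter, mem_univ, true_and, ne_eq, CharTwo.add_eq_zero, add_eq_right]
    exact fun x hx => hx.symm
  have hshift : ∑ x ∈ S, h (x + 1) = ∑ x ∈ S, h x :=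
    sum_nbij' (· + 1) (· + 1) hmem hmem (fun x _ => CharTwo.add_cancel_right x 1)
      (fun x _ => CharTwo.add_cancel_right x 1) fun _ _ => rfl
  have hpair : ∀ x, h x + h (x + 1) = if P x then -3 else 1 := by
    intro x
    have hq : (x + 1) ^ 2 + (x + 1) = x ^ 2 + x := by
      rw [CharTwo.add_sq, one_pow, add_add_add_comm, CharTwo.add_self_eq_zero, add_zero]
    have hs : (x + 1) ^ 2 * φ (x ^ 2 + x) = x ^ 2 * φ (x ^ 2 + x) + φ (x ^ 2 + x) := by
      rw [CharTwo.add_sq]; ring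
    rw [← neg_one_pow_val_add_sub, ← map_add, ← hs]
    simp only [h, hq]
    ring
  have hcard : #S + 2 = Fintype.card F := by
    rw [show S = ({0, 1} : Finset F)ᶜ by ext; simp [S], card_compl, card_pair zero_ne_one]
    have := Fintype.one_lt_card (α := F)
    omega
  have hsplit := card_filter_add_card_filter_not (s := S) P
  calc _ = ∑ x ∈ S, h x := by rw [mul_sum, ← sum_sub_distrib]
    _ = 1 / 2 * ∑ x ∈ S, (h x + h (x + 1)) := by rw [sum_add_distrib, hshift]; ring
    _ = 1 / 2 * ∑ x ∈ S, if P x then -3 else 1 := by simp_rw [hpair]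
    _ = _ := by
      rw [sum_ite, sum_const, sum_const, nsmul_eq_mul, nsmul_eq_mul, ← hcard, ← hsplit]
      push_cast
      ring

theorem isAPN_iff_sum_neg_one_pow_trace_eq (L : F →ₗ[ZMod 2] F) {G : F → F}
    (hG : ∀ x, G x = x ^ 3 + trace (ZMod 2) F x • L x) :
    IsAPN G ↔
      (∑ x ∈ univ.filter (fun x : F => x ≠ 0 ∧ x ≠ 1),
          (-1 : ℚ) ^ (trace (ZMod 2) F (x ^ 2 * L (x ^ 2 + x) / (x ^ 2 + x) ^ 3)).val)
        - 1 / 2 * (∑ x ∈ univ.filter (fun x : F => x ≠ 0 ∧ x ≠ 1),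
          (-1 : ℚ) ^ (trace (ZMod 2) F (L (x ^ 2 + x) / (x ^ 2 + x) ^ 3)).val)
        = Fintype.card F / 2 - 1 := by
  simp_rw [mul_div_assoc]
  rw [sum_neg_one_pow_trace_eq (fun u => L u / u ^ 3), sub_eq_self, mul_eq_zero,
    isAPN_iff_forall_not_trace L hG]
  simp [filter_eq_empty_iff]

end Sums

end FiniteFieldCharTwo

theorem stmt14 (n : ℕ) (hn : 0 < n)
    [Fintype (GaloisField 2 n)] [DecidableEq (GaloisField 2 n)]
    (L : GaloisField 2 n →ₗ[ZMod 2] GaloisField 2 n)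
    (G : GaloisField 2 n → GaloisField 2 n)
    (hG : ∀ x, G x = x ^ 3 + Tr n x • L x) :
    IsAPN G ↔
      (∑ x ∈ Finset.univ.filter (fun x : GaloisField 2 n => x ≠ 0 ∧ x ≠ 1),
          ((-1 : ℚ) ^ (Tr n (x ^ 2 * L (x ^ 2 + x) / (x ^ 2 + x) ^ 3)).val))
        - (1 / 2) * (∑ x ∈ Finset.univ.filter (fun x : GaloisField 2 n => x ≠ 0 ∧ x ≠ 1),
          ((-1 : ℚ) ^ (Tr n (L (x ^ 2 + x) / (x ^ 2 + x) ^ 3)).val))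
        = 2 ^ (n - 1) - 1 := by
  have hcard : (Fintype.card (GaloisField 2 n) : ℚ) / 2 = 2 ^ (n - 1) := by
    rw [Fintype.card_eq_nat_card, GaloisField.card 2 n hn.ne', Nat.cast_pow,
      ← pow_sub_one_mul hn.ne']
    ring
  unfold Tr at hG ⊢
  rw [isAPN_iff_sum_neg_one_pow_trace_eq L hG, hcard]
end

section
/- Let F : F_2^n → F_2^n be APN, U an (n−2)-dimensional subspace with cosets U₁ = U, U₂, U₃, U₄ partitioning F_2^n, and a₁, a₂, a₃, a₄ ∈ F_2^n. Define G by G(x) = F(x) + a_i for x ∈ U_i. Then G is APN if and only if F(x₁)+F(x₂)+F(x₃)+F(x₄) ≠ a₁+a₂+a₃+a₄ for every 2-dimensional affine subspace {x₁,x₂,x₃,x₄} of F_2^n meeting each coset U_i in exactly one point. -/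
namespace ZModModule

variable {V : Type*} [AddCommGroup V] [Module (ZMod 2) V]

theorem add_eq_zero_iff_eq {x y : V} : x + y = 0 ↔ x = y := by
  rw [← sub_eq_add, sub_eq_zero]

theorem add_add_cancel_left (x y : V) : x + (x + y) = y := by
  rw [← add_assoc, add_self, zero_add]

theorem two_zsmul_eq_zero (x : V) : (2 : ℤ) • x = 0 := by
  rw [two_zsmul, add_self]

theorem add_eq_add_of_add_add_add_eq_zero {x₁ x₂ x₃ x₄ : V} (h : x₁ + x₂ + x₃ + x₄ = 0) :
    x₁ + x₂ = x₃ + x₄ :=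
  add_eq_zero_iff_eq.1 (by rw [← add_assoc, h])

end ZModModule

open ZModModule

section APN

variable {V W : Type*} [AddCommGroup V] [Module (ZMod 2) V] [AddCommGroup W] [Module (ZMod 2) W]

/-- All four points of the flat solve `f (x + d) + f x = b` for `d = x₁ + x₂`, `b = f x₁ + f x₂`. -/
theorem IsAPN.add_add_add_ne_zero [Finite V] {f : V → W} (hf : IsAPN f) {x₁ x₂ x₃ x₄ : V}
    (h12 : x₁ ≠ x₂) (h13 : x₁ ≠ x₃) (h14 : x₁ ≠ x₄) (h23 : x₂ ≠ x₃) (h24 : x₂ ≠ x₄) (h34 : x₃ ≠ x₄)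
    (hsum : x₁ + x₂ + x₃ + x₄ = 0) : f x₁ + f x₂ + f x₃ + f x₄ ≠ 0 := by
  intro hval
  have hx : x₁ + x₂ = x₃ + x₄ := add_eq_add_of_add_add_add_eq_zero hsum
  have hfx : f x₁ + f x₂ = f x₃ + f x₄ := add_eq_add_of_add_add_add_eq_zero hval
  have hd : x₁ + x₂ ≠ 0 := fun h => h12 (add_eq_zero_iff_eq.1 h)
  have hsub : ({x₁, x₂, x₃, x₄} : Set V) ⊆ {x | f (x + (x₁ + x₂)) + f x = f x₁ + f x₂} := by
    simp only [Set.insert_subset_iff, Set.singleton_subset_iff, Set.mem_ofPred_eq]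
    refine ⟨?_, ?_, ?_, ?_⟩
    · rw [add_add_cancel_left, add_comm]
    · rw [add_comm x₁, add_add_cancel_left]
    · rw [hx, add_add_cancel_left, hfx, add_comm]
    · rw [hx, add_comm x₃, add_add_cancel_left, hfx]
  have hcard := Set.ncard_le_ncard hsub
  rw [Set.ncard_eq_four.2 ⟨x₁, x₂, x₃, x₄, h12, h13, h14, h23, h24, h34, rfl⟩] at hcard
  linarith [hf _ hd (f x₁ + f x₂)]

/-- Three solutions `x, x + d, w` of `f (x + d) + f x = b` span the flat `{x, x + d, w, w + d}`. -/
theorem isAPN_of_add_add_add_ne_zero {f : V → W}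
    (hf : ∀ x₁ x₂ x₃ x₄ : V, x₁ ≠ x₂ → x₁ ≠ x₃ → x₁ ≠ x₄ → x₂ ≠ x₃ → x₂ ≠ x₄ → x₃ ≠ x₄ →
      x₁ + x₂ + x₃ + x₄ = 0 → f x₁ + f x₂ + f x₃ + f x₄ ≠ 0) :
    IsAPN f := by
  intro d hd b
  by_contra! hlarge
  obtain ⟨x, hx⟩ : {x | f (x + d) + f x = b}.Nonempty :=
    Set.nonempty_of_ncard_ne_zero (by omega)
  have hpair : ({x, x + d} : Set V).ncard < {x | f (x + d) + f x = b}.ncard :=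
    (Set.ncard_insert_le _ _).trans_lt (by rw [Set.ncard_singleton]; omega)
  obtain ⟨w, hw, hwx⟩ := Set.exists_mem_notMem_of_ncard_lt_ncard hpair
  simp only [Set.mem_insert_iff, Set.mem_singleton_iff, not_or] at hwx
  simp only [Set.mem_ofPred_eq] at hx hw
  have hshift (y : V) : y ≠ y + d := fun h => hd (by simpa using h.symm)
  refine hf x (x + d) w (w + d) (hshift x) (Ne.symm hwx.1) ?_ (Ne.symm hwx.2) ?_ (hshift w)
    (by abel_nf; simp only [two_zsmul_eq_zero, add_zero]) ?_
  · rintro rfl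
    exact hwx.2 (by rw [add_assoc, add_self, add_zero])
  · exact fun h => hwx.1 (add_right_cancel h).symm
  · calc f x + f (x + d) + f w + f (w + d) = (f (x + d) + f x) + (f (w + d) + f w) := by abel
      _ = 0 := by rw [hx, hw, add_self]

theorem isAPN_iff_forall_add_add_add_ne_zero [Finite V] {f : V → W} :
    IsAPN f ↔ ∀ x₁ x₂ x₃ x₄ : V, x₁ ≠ x₂ → x₁ ≠ x₃ → x₁ ≠ x₄ → x₂ ≠ x₃ → x₂ ≠ x₄ → x₃ ≠ x₄ →
      x₁ + x₂ + x₃ + x₄ = 0 → f x₁ + f x₂ + f x₃ + f x₄ ≠ 0 :=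
  ⟨fun hf _ _ _ _ => hf.add_add_add_ne_zero, isAPN_of_add_add_add_ne_zero⟩

end APN

variable {V ι W : Type*}

theorem Set.injOn_of_forall_ncard_inter_eq_one {c : V → ι} {S : Set V}
    (h : ∀ i, (S ∩ {x | c x = i}).ncard = 1) : S.InjOn c := by
  intro x hx y hy hxy
  obtain ⟨z, hz⟩ := Set.ncard_eq_one.1 (h (c x))
  have hx' : x ∈ S ∩ {x' | c x' = c x} := ⟨hx, rfl⟩
  have hy' : y ∈ S ∩ {x' | c x' = c x} := ⟨hy, hxy.symm⟩
  rw [hz] at hx' hy'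
  exact hx'.trans hy'.symm

theorem Set.InjOn.ncard_inter_eq_one [Finite ι] {c : V → ι} {S : Set V} (hc : S.InjOn c)
    (hS : S.ncard = Nat.card ι) (i : ι) : (S ∩ {x | c x = i}).ncard = 1 := by
  have himage : c '' S = Set.univ := Set.eq_of_subset_of_ncard_le (Set.subset_univ _)
    (by rw [Set.ncard_univ, hc.ncard_image, hS])
  obtain ⟨x, hx, rfl⟩ : i ∈ c '' S := himage ▸ Set.mem_univ i
  refine Set.ncard_eq_one.2 ⟨x, Set.ext fun y => ⟨fun hy => hc hy.1 hx hy.2, ?_⟩⟩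
  rintro rfl
  exact ⟨hx, rfl⟩

theorem Finset.sum_comp_eq_sum_univ_of_injOn [Fintype ι] [DecidableEq ι] [AddCommMonoid W]
    {c : V → ι} {S : Finset V} (hc : Set.InjOn c S) (hS : S.card = Fintype.card ι) (a : ι → W) :
    ∑ x ∈ S, a (c x) = ∑ i, a i := by
  rw [← Finset.sum_image hc,
    Finset.eq_univ_of_card (S.image c) (by rw [Finset.card_image_of_injOn hc, hS])]

section
variable [AddCommMonoid W] {c : V → Fin 4} {x₁ x₂ x₃ x₄ : V}

theorem add_add_add_comp_eq_sum_of_injOn (h12 : x₁ ≠ x₂) (h13 : x₁ ≠ x₃) (h14 : x₁ ≠ x₄)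
    (h23 : x₂ ≠ x₃) (h24 : x₂ ≠ x₄) (h34 : x₃ ≠ x₄) (hc : Set.InjOn c {x₁, x₂, x₃, x₄})
    (a : Fin 4 → W) : a (c x₁) + a (c x₂) + a (c x₃) + a (c x₄) = a 0 + a 1 + a 2 + a 3 := by
  classical
  have hS : ({x₁, x₂, x₃, x₄} : Finset V).card = 4 :=
    Finset.card_eq_four.2 ⟨x₁, x₂, x₃, x₄, h12, h13, h14, h23, h24, h34, rfl⟩
  calc a (c x₁) + a (c x₂) + a (c x₃) + a (c x₄)
        = ∑ x ∈ ({x₁, x₂, x₃, x₄} : Finset V), a (c x) := by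
        simp [Finset.sum_insert, h12, h13, h14, h23, h24, h34, add_assoc]
    _ = ∑ i, a i := Finset.sum_comp_eq_sum_univ_of_injOn (by simpa using hc) hS a
    _ = a 0 + a 1 + a 2 + a 3 := Fin.sum_univ_four a
end

section
variable [AddCommGroup V] [Module (ZMod 2) V] {U : Submodule (ZMod 2) V} {c : V → ι}

theorem eq_iff_add_mem_of_forall_add_mem_iff {u : ι → V} (hc : ∀ x i, x + u i ∈ U ↔ c x = i)
    (x y : V) : c x = c y ↔ x + y ∈ U := by
  rw [← hc x (c y), ← add_add_add_cancel x y (u (c y)), U.add_mem_iff_left ((hc y _).2 rfl)]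

theorem injOn_or_add_add_add_comp_eq_zero [AddCommGroup W] [Module (ZMod 2) W]
    (hc : ∀ x y, c x = c y ↔ x + y ∈ U) {x₁ x₂ x₃ x₄ : V}
    (h12 : x₁ ≠ x₂) (h13 : x₁ ≠ x₃) (h14 : x₁ ≠ x₄) (h23 : x₂ ≠ x₃) (h24 : x₂ ≠ x₄) (h34 : x₃ ≠ x₄)
    (hsum : x₁ + x₂ + x₃ + x₄ = 0) (a : ι → W) :
    Set.InjOn c {x₁, x₂, x₃, x₄} ∨ a (c x₁) + a (c x₂) + a (c x₃) + a (c x₄) = 0 := by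
  have pair {y₁ y₂ y₃ y₄ : V} (h : y₁ + y₂ + y₃ + y₄ = 0) : c y₁ = c y₂ ↔ c y₃ = c y₄ := by
    rw [hc, hc, add_eq_add_of_add_add_add_eq_zero h]
  have p12 := pair hsum
  have p13 := pair (show x₁ + x₃ + x₂ + x₄ = 0 by rw [← hsum]; abel)
  have p14 := pair (show x₁ + x₄ + x₂ + x₃ = 0 by rw [← hsum]; abel)
  by_cases e12 : c x₁ = c x₂
  · right; rw [e12, p12.1 e12]; abel_nf; simp only [two_zsmul_eq_zero, add_zero]
  by_cases e13 : c x₁ = c x₃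
  · right; rw [e13, p13.1 e13]; abel_nf; simp only [two_zsmul_eq_zero, add_zero]
  by_cases e14 : c x₁ = c x₄
  · right; rw [e14, p14.1 e14]; abel_nf; simp only [two_zsmul_eq_zero, add_zero]
  left
  simp only [Set.mem_insert_iff, Set.mem_singleton_iff, h12, h13, h14, h23, h24, h34, or_self,
    not_false_eq_true, Set.injOn_insert, Set.injOn_singleton, Set.image_singleton, true_and,
    Set.mem_image, exists_eq_or_imp, ↓existsAndEq, not_or]
  exact ⟨⟨mt p12.2 e12, fun h => e14 (p14.2 h.symm), fun h => e13 (p13.2 h.symm)⟩,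
    Ne.symm e12, Ne.symm e13, Ne.symm e14⟩
end

theorem stmt16_general (n : ℕ)
    (F : (Fin n → ZMod 2) → (Fin n → ZMod 2)) (hF : IsAPN F)
    (U : Submodule (ZMod 2) (Fin n → ZMod 2))
    (u : Fin 4 → (Fin n → ZMod 2))
    -- the four cosets `U_i = U + u_i` partition `F_2^n`
    (hpart : ∀ x : Fin n → ZMod 2, ∃! i : Fin 4, x + u i ∈ U)
    (a : Fin 4 → (Fin n → ZMod 2))
    (G : (Fin n → ZMod 2) → (Fin n → ZMod 2))
    (hG : ∀ (i : Fin 4) (x : Fin n → ZMod 2), x + u i ∈ U → G x = F x + a i) :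
    IsAPN G ↔
      ∀ x₁ x₂ x₃ x₄ : Fin n → ZMod 2,
        x₁ ≠ x₂ → x₁ ≠ x₃ → x₁ ≠ x₄ → x₂ ≠ x₃ → x₂ ≠ x₄ → x₃ ≠ x₄ →
        x₁ + x₂ + x₃ + x₄ = 0 →
        (∀ i : Fin 4,
          ({x₁, x₂, x₃, x₄} ∩ {x : Fin n → ZMod 2 | x + u i ∈ U}).ncard = 1) →
        F x₁ + F x₂ + F x₃ + F x₄ ≠ a 0 + a 1 + a 2 + a 3 := by
  choose c hc using fun x => (hpart x).exists
  have hmem : ∀ x i, x + u i ∈ U ↔ c x = i := fun x i =>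
    ⟨fun h => (hpart x).unique (hc x) h, fun h => h ▸ hc x⟩
  have hGF : ∀ x₁ x₂ x₃ x₄, G x₁ + G x₂ + G x₃ + G x₄ =
      (F x₁ + F x₂ + F x₃ + F x₄) + (a (c x₁) + a (c x₂) + a (c x₃) + a (c x₄)) := by
    intro x₁ x₂ x₃ x₄
    simp only [fun x => hG _ x (hc x)]
    abel
  simp only [hmem]
  rw [isAPN_iff_forall_add_add_add_ne_zero] at hF ⊢
  constructor
  · intro hGapn x₁ x₂ x₃ x₄ h12 h13 h14 h23 h24 h34 hsum hmeet hFsum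
    apply hGapn x₁ x₂ x₃ x₄ h12 h13 h14 h23 h24 h34 hsum
    rw [hGF, hFsum, add_add_add_comp_eq_sum_of_injOn h12 h13 h14 h23 h24 h34
      (Set.injOn_of_forall_ncard_inter_eq_one hmeet), add_self]
  · intro hFa x₁ x₂ x₃ x₄ h12 h13 h14 h23 h24 h34 hsum hGsum
    rw [hGF] at hGsum
    rcases injOn_or_add_add_add_comp_eq_zero (eq_iff_add_mem_of_forall_add_mem_iff hmem)
      h12 h13 h14 h23 h24 h34 hsum a with hinj | hzero
    · refine hFa x₁ x₂ x₃ x₄ h12 h13 h14 h23 h24 h34 hsum (hinj.ncard_inter_eq_one ?_) ?_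
      · rw [Set.ncard_eq_four.2 ⟨x₁, x₂, x₃, x₄, h12, h13, h14, h23, h24, h34, rfl⟩, Nat.card_fin]
      · rwa [add_add_add_comp_eq_sum_of_injOn h12 h13 h14 h23 h24 h34 hinj,
          add_eq_zero_iff_eq] at hGsum
    · exact hF x₁ x₂ x₃ x₄ h12 h13 h14 h23 h24 h34 hsum (by rwa [hzero, add_zero] at hGsum)

theorem stmt16 (n : ℕ)
    (F : (Fin n → ZMod 2) → (Fin n → ZMod 2)) (hF : IsAPN F)
    (U : Submodule (ZMod 2) (Fin n → ZMod 2))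
    (hU : Module.finrank (ZMod 2) U = n - 2)
    (u : Fin 4 → (Fin n → ZMod 2)) (hu0 : u 0 = 0)
    -- the four cosets `U_i = U + u_i` partition `F_2^n`
    (hpart : ∀ x : Fin n → ZMod 2, ∃! i : Fin 4, x + u i ∈ U)
    (a : Fin 4 → (Fin n → ZMod 2))
    (G : (Fin n → ZMod 2) → (Fin n → ZMod 2))
    (hG : ∀ (i : Fin 4) (x : Fin n → ZMod 2), x + u i ∈ U → G x = F x + a i) :
    IsAPN G ↔
      ∀ x₁ x₂ x₃ x₄ : Fin n → ZMod 2,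
        x₁ ≠ x₂ → x₁ ≠ x₃ → x₁ ≠ x₄ → x₂ ≠ x₃ → x₂ ≠ x₄ → x₃ ≠ x₄ →
        x₁ + x₂ + x₃ + x₄ = 0 →
        (∀ i : Fin 4,
          ({x₁, x₂, x₃, x₄} ∩ {x : Fin n → ZMod 2 | x + u i ∈ U}).ncard = 1) →
        F x₁ + F x₂ + F x₃ + F x₄ ≠ a 0 + a 1 + a 2 + a 3 :=
  stmt16_general n F hF U u hpart a G hG
end

section
/- Let n be even and F(x) = x³ on F_{2^n}. Suppose Tr₂ⁿ denotes the trace from F_{2^n} to F_4 and Tr₁ⁿ the absolute trace. If {x₁,x₂,x₃,x₄} is a 2-flat with Tr₂ⁿ(x₁)=0, Tr₂ⁿ(x₂)=1, Tr₂ⁿ(x₃)=β, Tr₂ⁿ(x₄)=β² (β a primitive cube root of unity in F_4), then for the cosets U_i = {x : Tr₂ⁿ(x) = c_i} with (c₁,c₂,c₃,c₄) = (0,1,β,β²), the function G(x) = F(x) + a_i on U_i with a₁ = a₂ = 0, a₃ + a₄ ∉ {F(x₁)+F(x₂)+F(x₃)+F(x₄) : {x_i} a 2-flat with x_i ∈ U_i}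 is APN provided F(x₁)+F(x₂)+F(x₃)+F(x₄) ≠ a₁+a₂+a₃+a₄ for all such flats. -/
/-- The trace `Tr₂ⁿ(x) = Σ_{i=0}^{n/2-1} x^{4^i}` from `F_{2^n}` onto its
subfield `F_4` (for `n` even). -/
noncomputable def Tr2 (n : ℕ) (x : GaloisField 2 n) : GaloisField 2 n :=
  ∑ i ∈ Finset.range (n / 2), x ^ (4 ^ i)

open Function Finset

lemma injective_vecCons_four_iff {α : Type*} {a b c d : α} :
    Injective ![a, b, c, d] ↔ a ≠ b ∧ a ≠ c ∧ a ≠ d ∧ b ≠ c ∧ b ≠ d ∧ c ≠ d := by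
  simp [← List.nodup_ofFn, List.ofFn_succ, and_assoc]

lemma exists_perm_apply_eq_of_forall_mem_range {ι α : Type*} [Finite ι] {f g : ι → α}
    (hf : Injective f) (hfg : ∀ i, f i ∈ Set.range g) :
    ∃ σ : Equiv.Perm ι, ∀ i, f (σ i) = g i := by
  choose π hπ using hfg
  have hπ_inj : Injective π := fun i j h => hf (by rw [← hπ, ← hπ, h])
  let σ := Equiv.ofBijective π hπ_inj.bijective_of_finite
  exact ⟨σ.symm, fun i => by rw [← hπ]; exact congrArg g (σ.apply_symm_apply i)⟩

section APN

variable {V W U : Type*} [AddCommGroup V] [AddCommGroup W] [AddCommGroup U]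

lemma isAPN_of_forall_eq_or_eq_add {f : V → W}
    (hf : ∀ a, a ≠ 0 → ∀ x y, f (x + a) + f x = f (y + a) + f y → y = x ∨ y = x + a) :
    IsAPN f := by
  intro a ha b
  rcases Set.eq_empty_or_nonempty {x | f (x + a) + f x = b} with hS | ⟨x, hx⟩
  · simp [hS]
  have hsub : {x | f (x + a) + f x = b} ⊆ {x, x + a} := fun y hy =>
    hf a ha x y (hx.trans hy.symm)
  calc _ ≤ ({x, x + a} : Set V).ncard := Set.ncard_le_ncard hsub
    _ ≤ 2 := (Set.ncard_insert_le _ _).trans (by simp)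

lemma IsAPN.eq_or_eq_add [Finite V] (hV : ∀ v : V, v + v = 0) {f : V → W} (hf : IsAPN f)
    {a : V} (ha : a ≠ 0) {x y : V} (hxy : f (x + a) + f x = f (y + a) + f y) :
    y = x ∨ y = x + a := by
  by_contra! hne
  have hxa : x ≠ x + a := fun h => ha (by simpa using h)
  have hsub : {x, x + a, y} ⊆ {z | f (z + a) + f z = f (x + a) + f x} := by
    rintro z (rfl | rfl | rfl)
    · rfl
    · change f (x + a + a) + f (x + a) = _
      rw [add_assoc, hV, add_zero, add_comm]
    · exact hxy.symm
  have h3 : ({x, x + a, y} : Set V).ncard = 3 :=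
    Set.ncard_eq_three.mpr ⟨x, x + a, y, hxa, hne.1.symm, hne.2.symm, rfl⟩
  have := (Set.ncard_le_ncard hsub).trans (hf a ha _)
  omega

lemma injective_vec_add_add_of_ne {s t d : U} (hd2 : d + d = 0) (hd : d ≠ 0) (hts : t ≠ s)
    (htsd : t ≠ s + d) : Injective ![s, s + d, t, t + d] := by
  rw [injective_vecCons_four_iff]
  refine ⟨by simpa using hd, hts.symm, fun h => htsd ?_, fun h => htsd h.symm,
    by simpa using hts.symm, by simpa using hd⟩
  rw [h, add_assoc, hd2, add_zero]

theorem IsAPN.add_comp_of_flat_sum_ne [Finite V] (hV : ∀ v : V, v + v = 0)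
    (hW : ∀ w : W, w + w = 0) {F : V → W} (hF : IsAPN F) (T : V →+ U) (A : U → W)
    (hflat : ∀ q : Fin 4 → V, ∑ i, q i = 0 → Injective (T ∘ q) →
      ∑ i, F (q i) ≠ ∑ i, A (T (q i))) :
    IsAPN fun x => F x + A (T x) := by
  refine isAPN_of_forall_eq_or_eq_add fun e he x y hxy => ?_
  by_cases hA : A (T (x + e)) + A (T x) = A (T (y + e)) + A (T y)
  · refine hF.eq_or_eq_add hV he ?_
    calc F (x + e) + F x = F (x + e) + A (T (x + e)) + (F x + A (T x))
          - (A (T (x + e)) + A (T x)) := by abel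
      _ = F (y + e) + F y := by rw [hxy, hA]; abel
  exfalso
  simp only [map_add] at hA hxy
  have hTe : T e + T e = 0 := by rw [← map_add, hV, map_zero]
  have hTq : T ∘ ![x, x + e, y, y + e] = ![T x, T x + T e, T y, T y + T e] := by
    ext i; fin_cases i <;> simp
  have hinj : Injective (T ∘ ![x, x + e, y, y + e]) := by
    rw [hTq]
    refine injective_vec_add_add_of_ne hTe (fun h => hA ?_) (fun h => hA ?_) (fun h => hA ?_)
    · rw [h, add_zero, add_zero, hW, hW]
    · rw [h]
    · rw [h, add_assoc, hTe, add_zero, add_comm]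
  refine hflat ![x, x + e, y, y + e] ?_ hinj ?_
  · calc ∑ i, ![x, x + e, y, y + e] i = (x + x) + (y + y) + (e + e) := by
          simp only [Fin.sum_univ_four, Fin.isValue, Matrix.cons_val_zero, Matrix.cons_val_one,
            Matrix.cons_val]
          abel
      _ = 0 := by simp only [hV]
  · have hneg : ∀ w : W, -w = w := fun w => neg_eq_of_add_eq_zero_right (hW w)
    rw [← hneg (∑ i, A _), ← add_eq_zero_iff_eq_neg]
    simp only [Fin.sum_univ_four, Fin.isValue, Matrix.cons_val_zero, Matrix.cons_val_one,
      Matrix.cons_val, map_add]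
    calc _ = F (x + e) + A (T x + T e) + (F x + A (T x))
          + (F (y + e) + A (T y + T e) + (F y + A (T y))) := by abel
      _ = 0 := by rw [hxy, hW]

end APN

section CharTwo

variable {R : Type*} [CommRing R] [IsDomain R] [CharP R 2]

lemma eq_or_eq_add_of_add_pow_three_add_pow_three_eq {a x y : R} (ha : a ≠ 0)
    (h : (x + a) ^ 3 + x ^ 3 = (y + a) ^ 3 + y ^ 3) : y = x ∨ y = x + a := by
  have h2 : (2 : R) = 0 := CharTwo.two_eq_zero
  have hfac : a * ((x + y) * (x + y + a)) = 0 := by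
    linear_combination h + (y ^ 3 - x ^ 3 + a * x * y - a * x ^ 2 - a ^ 2 * x + 2 * a * y ^ 2
      + 2 * a ^ 2 * y) * h2
  rcases mul_eq_zero.mp ((mul_eq_zero.mp hfac).resolve_left ha) with hxy | hxya
  · exact Or.inl (CharTwo.add_eq_zero.mp hxy).symm
  · exact Or.inr (CharTwo.add_eq_zero.mp (by rw [← hxya]; ring)).symm

lemma isAPN_pow_three : IsAPN fun x : R => x ^ 3 :=
  isAPN_of_forall_eq_or_eq_add fun _ ha _ _ => eq_or_eq_add_of_add_pow_three_add_pow_three_eq ha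

lemma injective_zero_one_self_sq {β : R} (hβ : β ^ 2 + β + 1 = 0) :
    Injective ![0, 1, β, β ^ 2] := by
  have hβ0 : β ≠ 0 := by rintro rfl; simp at hβ
  have hβ1 : β ≠ 1 := by
    rintro rfl
    simp [CharTwo.add_self_eq_zero] at hβ
  have hβsq : β ^ 2 = β + 1 := by
    rw [← CharTwo.add_eq_zero, ← add_assoc, hβ]
  rw [injective_vecCons_four_iff, hβsq]
  refine ⟨zero_ne_one, hβ0.symm, fun h => hβ1 ?_, hβ1.symm, fun h => hβ0 ?_, by simp⟩
  · exact CharTwo.add_eq_zero.mp h.symm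
  · simpa using h

end CharTwo

lemma mem_range_zero_one_self_sq_of_pow_four_eq_self {R : Type*} [CommRing R] [IsDomain R]
    {β t : R} (hβ : β ^ 2 + β + 1 = 0) (ht : t ^ 4 = t) :
    t ∈ Set.range ![0, 1, β, β ^ 2] := by
  have hfac : t * (t - 1) * (t - β) * (t - β ^ 2) = 0 := by
    linear_combination ht + (-t ^ 3 + β * t ^ 2 + (1 - β) * t) * hβ
  simp only [mul_eq_zero, sub_eq_zero] at hfac
  rcases hfac with ((h | h) | h) | h
  exacts [⟨0, h.symm⟩, ⟨1, h.symm⟩, ⟨2, h.symm⟩, ⟨3, h.symm⟩]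

lemma sum_range_pow_pow_char_pow_eq_self {R : Type*} [CommRing R] {p : ℕ} [ExpChar R p]
    {k m : ℕ} {x : R} (hx : x ^ (p ^ k) ^ m = x) :
    (∑ i ∈ range m, x ^ (p ^ k) ^ i) ^ p ^ k = ∑ i ∈ range m, x ^ (p ^ k) ^ i := by
  have hshift := sum_range_succ' (fun i => x ^ (p ^ k) ^ i) m
  rw [sum_range_succ, hx, pow_zero, pow_one, add_left_inj] at hshift
  rw [sum_pow_char_pow, hshift]
  simp only [← pow_mul, pow_succ]

section Trace

variable {n : ℕ}

lemma Tr2_add (x y : GaloisField 2 n) : Tr2 n (x + y) = Tr2 n x + Tr2 n y := by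
  simp only [Tr2, ← sum_add_distrib]
  refine sum_congr rfl fun i _ => ?_
  rw [show 4 ^ i = 2 ^ (2 * i) by rw [pow_mul]; norm_num, add_pow_char_pow]

noncomputable def trace2Hom (n : ℕ) : GaloisField 2 n →+ GaloisField 2 n :=
  AddMonoidHom.mk' (Tr2 n) Tr2_add

lemma GaloisField.pow_two_pow_eq_self (x : GaloisField 2 n) : x ^ 2 ^ n = x := by
  rcases eq_or_ne n 0 with rfl | hn
  · simp
  have : Fintype (GaloisField 2 n) := Fintype.ofFinite _
  rw [← GaloisField.card 2 n hn, Nat.card_eq_fintype_card]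
  exact FiniteField.pow_card x

lemma Tr2_pow_four (hneven : Even n) (x : GaloisField 2 n) : Tr2 n x ^ 4 = Tr2 n x := by
  have hx : x ^ (2 ^ 2) ^ (n / 2) = x := by
    rw [← pow_mul, Nat.two_mul_div_two_of_even hneven, GaloisField.pow_two_pow_eq_self]
  simpa [Tr2] using sum_range_pow_pow_char_pow_eq_self hx

end Trace

theorem stmt19_general (n : ℕ) (hneven : Even n)
    -- `β` is a primitive cube root of unity, generating `F_4 ⊆ F_{2^n}`
    (β : GaloisField 2 n) (hβ : β ^ 2 + β + 1 = 0)
    -- the four trace values `(0, 1, β, β²)` determining the cosets `U_i`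
    (c : Fin 4 → GaloisField 2 n)
    (hc : c = ![0, 1, β, β ^ 2])
    (a : Fin 4 → GaloisField 2 n)
    (G : GaloisField 2 n → GaloisField 2 n)
    (hG : ∀ (i : Fin 4) (x : GaloisField 2 n), Tr2 n x = c i → G x = x ^ 3 + a i)
    -- `F(x₁)+F(x₂)+F(x₃)+F(x₄) ≠ a₁+a₂+a₃+a₄` for every 2-flat with one point in each coset
    (hflats : ∀ x : Fin 4 → GaloisField 2 n,
      Function.Injective x →
      x 0 + x 1 + x 2 + x 3 = 0 →
      (∀ i : Fin 4, Tr2 n (x i) = c i) →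
      (x 0) ^ 3 + (x 1) ^ 3 + (x 2) ^ 3 + (x 3) ^ 3 ≠ a 0 + a 1 + a 2 + a 3) :
    IsAPN G := by
  subst hc
  have hc_inj := injective_zero_one_self_sq hβ
  have hTc : ∀ x, Tr2 n x ∈ Set.range ![0, 1, β, β ^ 2] := fun x =>
    mem_range_zero_one_self_sq_of_pow_four_eq_self hβ (Tr2_pow_four hneven x)
  set A := extend ![0, 1, β, β ^ 2] a 0
  have hGA : G = fun x => x ^ 3 + A (trace2Hom n x) := by
    funext x
    obtain ⟨i, hi⟩ := hTc x
    rw [hG i x hi.symm]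
    simp [A, trace2Hom, ← hi, hc_inj.extend_apply]
  rw [hGA]
  refine isAPN_pow_three.add_comp_of_flat_sum_ne CharTwo.add_self_eq_zero
    CharTwo.add_self_eq_zero _ _ fun q hq hTq => ?_
  obtain ⟨σ, hσ⟩ := exists_perm_apply_eq_of_forall_mem_range hTq fun i => hTc (q i)
  simp only [comp_apply] at hσ
  have hsumA : ∑ i, A (trace2Hom n (q i)) = ∑ i, a i := by
    rw [← Equiv.sum_comp σ]
    simp [A, hσ, hc_inj.extend_apply]
  have hflat := hflats (q ∘ σ) (hTq.of_comp.comp σ.injective)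
    (by simpa [Fin.sum_univ_four] using (Equiv.sum_comp σ q).trans hq) hσ
  rw [← Equiv.sum_comp σ, hsumA]
  simpa [Fin.sum_univ_four] using hflat

theorem stmt19 (n : ℕ) (hn : 0 < n) (hneven : Even n)
    -- `β` is a primitive cube root of unity, generating `F_4 ⊆ F_{2^n}`
    (β : GaloisField 2 n) (hβ : β ^ 2 + β + 1 = 0)
    -- the four trace values `(0, 1, β, β²)` determining the cosets `U_i`
    (c : Fin 4 → GaloisField 2 n)
    (hc : c = ![0, 1, β, β ^ 2])
    (a : Fin 4 → GaloisField 2 n) (ha0 : a 0 = 0) (ha1 : a 1 = 0)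
    (G : GaloisField 2 n → GaloisField 2 n)
    (hG : ∀ (i : Fin 4) (x : GaloisField 2 n), Tr2 n x = c i → G x = x ^ 3 + a i)
    -- `F(x₁)+F(x₂)+F(x₃)+F(x₄) ≠ a₁+a₂+a₃+a₄` for every 2-flat with one point in each coset
    (hflats : ∀ x : Fin 4 → GaloisField 2 n,
      Function.Injective x →
      x 0 + x 1 + x 2 + x 3 = 0 →
      (∀ i : Fin 4, Tr2 n (x i) = c i) →
      (x 0) ^ 3 + (x 1) ^ 3 + (x 2) ^ 3 + (x 3) ^ 3 ≠ a 0 + a 1 + a 2 + a 3) :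
    IsAPN G :=
  stmt19_general n hneven β hβ c hc a G hG hflats
end
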